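/- Let G be a group and let H be a normal subgroup of G with H contained in the commutator subgroup [G,G]. Let S ⊆ H be a generating set for H that is contained in finitely many orbits of the conjugation action of G on H. Suppose there is a constant C ≥ 0 such that every element of H can be written as a product of at most C elements of S ∪ S⁻¹. Then there is a constant K ≥ 0 such that every element of H can be written as a product of at most K commutators of elements of G. -/

import Mathlib

open scoped commutatorElement

/-- `g` is a product of `n` commutators in `G`. -/
def IsCommProd {G : Type*} [Group G] (n : ℕ) (g : G) : Prop :=
  ∃ a b : Fin n → G, g = (List.ofFn fun i => ⁅a i, b i⁆).prod

/-- The commutator length of `g`: the smallest `n` such that `g` is a product of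
`n` commutators. -/
noncomputable def cl {G : Type*} [Group G] (g : G) : ℕ :=
  sInf {n : ℕ | IsCommProd n g}

/-- `w` is a product of `n` elements of `S ∪ S⁻¹`. -/
def IsWordProd {G : Type*} [Group G] (S : Set G) (n : ℕ) (w : G) : Prop :=
  ∃ f : Fin n → G, (∀ i, f i ∈ S ∪ S⁻¹) ∧ w = (List.ofFn f).prod

/-- The word norm of `w` with respect to the generating set `S`: the smallest `n`
such that `w` is a product of `n` elements of `S ∪ S⁻¹`. -/
noncomputable def wordNorm {G : Type*} [Group G] (S : Set G) (w : G) : ℕ :=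
  sInf {n : ℕ | IsWordProd S n w}

/-!
A product of `n` commutators is an element of the pointwise power `commutatorSet G ^ n`, and
this family of sets is increasing in `n`, closed under inversion and conjugation, and exhausts
`[G, G]`. The finitely many orbit representatives in `T` lie in one power `commutatorSet G ^ M`,
hence so does all of `S ∪ S⁻¹`, and a word of length `n ≤ C` in it lies in
`commutatorSet G ^ (M * C)`.
-/

open scoped Pointwise

section CommutatorSetPow

variable {G : Type*} [Group G]

lemma isCommProd_iff_mem_commutatorSet_pow {n : ℕ} {g : G} :
    IsCommProd n g ↔ g ∈ commutatorSet G ^ n := by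
  rw [Set.mem_pow]
  constructor
  · rintro ⟨a, b, rfl⟩
    exact ⟨fun i => ⟨⁅a i, b i⁆, commutator_mem_commutatorSet _ _⟩, rfl⟩
  · rintro ⟨f, rfl⟩
    choose a b hab using fun i => (f i).2
    exact ⟨a, b, by simp only [hab]⟩

lemma isWordProd_iff_mem_pow {S : Set G} {n : ℕ} {w : G} :
    IsWordProd S n w ↔ w ∈ (S ∪ S⁻¹) ^ n := by
  rw [Set.mem_pow]
  constructor
  · rintro ⟨f, hf, rfl⟩
    exact ⟨fun i => ⟨f i, hf i⟩, rfl⟩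
  · rintro ⟨f, rfl⟩
    exact ⟨fun i => f i, fun i => (f i).2, rfl⟩

lemma inv_commutatorSet : (commutatorSet G)⁻¹ = commutatorSet G := by
  ext g
  simp only [Set.mem_inv, mem_commutatorSet_iff]
  constructor <;> rintro ⟨a, b, hab⟩
  · exact ⟨b, a, by rw [← commutatorElement_inv, hab, inv_inv]⟩
  · exact ⟨b, a, by rw [← commutatorElement_inv, hab]⟩

lemma inv_mem_commutatorSet_pow {n : ℕ} {g : G} (hg : g ∈ commutatorSet G ^ n) :
    g⁻¹ ∈ commutatorSet G ^ n := by
  simpa only [← inv_pow, inv_commutatorSet] using Set.inv_mem_inv.2 hg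

lemma conj_mem_commutatorSet_pow {n : ℕ} {g : G} (x : G) (hg : g ∈ commutatorSet G ^ n) :
    x * g * x⁻¹ ∈ commutatorSet G ^ n := by
  have hconj : MulAut.conj x '' commutatorSet G ⊆ commutatorSet G := by
    rintro _ ⟨_, ⟨a, b, rfl⟩, rfl⟩
    rw [map_commutatorElement]
    exact commutator_mem_commutatorSet _ _
  refine Set.pow_subset_pow_left hconj ?_
  rw [← Set.image_pow]
  exact ⟨g, hg, rfl⟩

lemma exists_mem_commutatorSet_pow {g : G} (hg : g ∈ commutator G) :
    ∃ n, g ∈ commutatorSet G ^ n := by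
  rw [commutator_eq_closure] at hg
  induction hg using Subgroup.closure_induction with
  | mem g hg => exact ⟨1, by rwa [pow_one]⟩
  | one => exact ⟨0, rfl⟩
  | mul a b _ _ ha hb =>
    obtain ⟨m, ha⟩ := ha
    obtain ⟨n, hb⟩ := hb
    exact ⟨m + n, by rw [pow_add]; exact Set.mul_mem_mul ha hb⟩
  | inv a _ ha =>
    obtain ⟨n, ha⟩ := ha
    exact ⟨n, inv_mem_commutatorSet_pow ha⟩

lemma Finset.exists_subset_commutatorSet_pow {T : Finset G} (hT : (T : Set G) ⊆ commutator G) :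
    ∃ M, (T : Set G) ⊆ commutatorSet G ^ M := by
  choose! n hn using fun t (ht : t ∈ T) => exists_mem_commutatorSet_pow (hT ht)
  exact ⟨T.sup n, fun t ht =>
    Set.pow_subset_pow_right (one_mem_commutatorSet G) (T.le_sup ht) (hn t ht)⟩

lemma exists_union_inv_subset_commutatorSet_pow {S : Set G} {T : Finset G}
    (hT : (T : Set G) ⊆ commutator G) (horb : ∀ s ∈ S, ∃ g : G, ∃ t ∈ T, s = g * t * g⁻¹) :
    ∃ M, S ∪ S⁻¹ ⊆ commutatorSet G ^ M := by
  obtain ⟨M, hM⟩ := T.exists_subset_commutatorSet_pow hT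
  have hS : S ⊆ commutatorSet G ^ M := fun s hs => by
    obtain ⟨g, t, ht, rfl⟩ := horb s hs
    exact conj_mem_commutatorSet_pow g (hM ht)
  exact ⟨M, Set.union_subset hS fun s hs => inv_inv s ▸ inv_mem_commutatorSet_pow (hS hs)⟩

end CommutatorSetPow

theorem bounded_cl_of_bounded_wordNorm_general {G : Type*} [Group G] (H : Subgroup G)
    (hHcomm : H ≤ commutator G) (S : Set G) (hSH : S ⊆ (H : Set G))
    (T : Finset G) (hTS : (T : Set G) ⊆ S)
    (horb : ∀ s ∈ S, ∃ g : G, ∃ t ∈ T, s = g * t * g⁻¹)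
    (C : ℕ) (hC : ∀ h ∈ H, ∃ n ≤ C, IsWordProd S n h) :
    ∃ K : ℕ, ∀ h ∈ H, ∃ n ≤ K, IsCommProd n h := by
  obtain ⟨M, hM⟩ := exists_union_inv_subset_commutatorSet_pow
    (hTS.trans <| hSH.trans hHcomm) horb
  refine ⟨M * C, fun h hh => ⟨M * C, le_rfl, ?_⟩⟩
  obtain ⟨n, hnC, hw⟩ := hC h hh
  have hpow : (S ∪ S⁻¹) ^ n ⊆ commutatorSet G ^ (M * C) := calc
    (S ∪ S⁻¹) ^ n ⊆ (commutatorSet G ^ M) ^ n := Set.pow_subset_pow_left hM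
    _ = commutatorSet G ^ (M * n) := (pow_mul _ _ _).symm
    _ ⊆ commutatorSet G ^ (M * C) :=
      Set.pow_subset_pow_right (one_mem_commutatorSet G) (Nat.mul_le_mul_left M hnC)
  exact isCommProd_iff_mem_commutatorSet_pow.2 (hpow (isWordProd_iff_mem_pow.1 hw))

/-- If `H ⊴ G` lies in `[G,G]`, `S` generates `H` and lies in finitely many
`G`-conjugacy orbits, and every element of `H` is a product of at most `C` elements of
`S ∪ S⁻¹`, then the commutator length (in `G`) is uniformly bounded on `H`. -/
theorem bounded_cl_of_bounded_wordNorm {G : Type*} [Group G] (H : Subgroup G) [H.Normal]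
    (hHcomm : H ≤ commutator G) (S : Set G) (hSH : S ⊆ (H : Set G))
    (hSgen : Subgroup.closure S = H)
    (T : Finset G) (hTS : (T : Set G) ⊆ S)
    (horb : ∀ s ∈ S, ∃ g : G, ∃ t ∈ T, s = g * t * g⁻¹)
    (C : ℕ) (hC : ∀ h ∈ H, ∃ n ≤ C, IsWordProd S n h) :
    ∃ K : ℕ, ∀ h ∈ H, ∃ n ≤ K, IsCommProd n h :=
  bounded_cl_of_bounded_wordNorm_general H hHcomm S hSH T hTS horb C hC
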